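/- In a Minkowski space whose unit ball B is indecomposable and not a segment-sum (e.g. the cross-polytope), the only bodies of constant width are dilates of B, and the Jung constant is strictly larger than the maximal Jung ratio over constant width bodies: j(M^n) > 1/2 = max over K of constant width of j(K), for n ≥ 3. -/

import Mathlib

open Set Pointwise

/-- `V n` is `ℝ^n` (as a Euclidean space, also used as carrier for general
Minkowski spaces whose unit ball `B` is given as a set). -/
abbrev V (n : ℕ) := EuclideanSpace ℝ (Fin n)

/-- A convex body: compact, convex, with nonempty interior. -/
def IsConvexBody {n : ℕ} (K : Set (V n)) : Prop :=
  Convex ℝ K ∧ IsCompact K ∧ (interior K).Nonempty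

/-- A (centrally) symmetric unit ball of a norm. -/
def IsSymUnitBall {n : ℕ} (B : Set (V n)) : Prop :=
  IsConvexBody B ∧ B = -B

/-- Circumradius of `K` with respect to the unit ball `B`. -/
noncomputable def circum {n : ℕ} (B K : Set (V n)) : ℝ :=
  sInf {ρ : ℝ | 0 < ρ ∧ ∃ c : V n, K ⊆ c +ᵥ ρ • B}

/-- Inradius of `K` with respect to the unit ball `B`. -/
noncomputable def inrad {n : ℕ} (B K : Set (V n)) : ℝ :=
  sSup {ρ : ℝ | 0 < ρ ∧ ∃ c : V n, c +ᵥ ρ • B ⊆ K}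

/-- Diameter of `K` in the norm with unit ball `B` (via the Minkowski gauge). -/
noncomputable def mdiam {n : ℕ} (B K : Set (V n)) : ℝ :=
  sSup {d : ℝ | ∃ x ∈ K, ∃ y ∈ K, d = gauge B (x - y)}

/-- Minkowski asymmetry of `K`. -/
noncomputable def asym {n : ℕ} (K : Set (V n)) : ℝ :=
  sInf {ρ : ℝ | 0 < ρ ∧ ∃ c : V n, -K ⊆ c +ᵥ ρ • K}

/-- `K` is complete (diametrically maximal) w.r.t. the unit ball `B`. -/
def IsCompleteBody {n : ℕ} (B K : Set (V n)) : Prop :=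
  IsConvexBody K ∧ ∀ x : V n, x ∉ K → mdiam B K < mdiam B (K ∪ {x})

/-- `Kstar` is a completion of `K` w.r.t. the unit ball `B`. -/
def IsCompletionOf {n : ℕ} (B Kstar K : Set (V n)) : Prop :=
  IsCompleteBody B Kstar ∧ K ⊆ Kstar ∧ mdiam B Kstar = mdiam B K

/-- Jung ratio `R(K)/D(K)`. -/
noncomputable def jungRatio {n : ℕ} (B K : Set (V n)) : ℝ :=
  circum B K / mdiam B K

/-- Jung constant of the Minkowski space with unit ball `B`. -/
noncomputable def jungConst {n : ℕ} (B : Set (V n)) : ℝ :=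
  sSup {j : ℝ | ∃ K : Set (V n), IsConvexBody K ∧ j = jungRatio B K}

/-- Maximal Minkowski asymmetry over complete bodies. -/
noncomputable def asymConst {n : ℕ} (B : Set (V n)) : ℝ :=
  sSup {s : ℝ | ∃ K : Set (V n), IsCompleteBody B K ∧ s = asym K}

/-- Banach–Mazur distance between `K` and `C`. -/
noncomputable def dBM {n : ℕ} (K C : Set (V n)) : ℝ :=
  sInf {ρ : ℝ | 0 < ρ ∧ ∃ (A : (V n) ≃ᵃ[ℝ] (V n)) (x : V n),
    K ⊆ A '' C ∧ A '' C ⊆ x +ᵥ ρ • K}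

/-- `S` is a `k`-dimensional simplex. -/
def IsSimplexDim {n : ℕ} (k : ℕ) (S : Set (V n)) : Prop :=
  ∃ v : Fin (k + 1) → V n, AffineIndependent ℝ v ∧ S = convexHull ℝ (Set.range v)

/-- Helly property with parameter `k` for translates of `B`. -/
def HellyProp {n : ℕ} (B : Set (V n)) (k : ℕ) : Prop :=
  ∀ X : Set (V n), X.Nonempty →
    (∀ J : Finset (V n), ↑J ⊆ X → J.card ≤ k + 1 →
      (⋂ x ∈ (J : Set (V n)), (x +ᵥ B)).Nonempty) →
    (⋂ x ∈ X, (x +ᵥ B)).Nonempty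

/-- Helly dimension of `B`: the least positive `k` with the Helly property. -/
noncomputable def hellyDim {n : ℕ} (B : Set (V n)) : ℕ :=
  sInf {k : ℕ | 0 < k ∧ HellyProp B k}

/-- `K` is of constant width w.r.t. the unit ball `B`: `K - K` is a dilate of `B`. -/
def IsConstWidth {n : ℕ} (B K : Set (V n)) : Prop :=
  ∃ γ : ℝ, 0 < γ ∧ K - K = γ • B

/-- A regular `n`-simplex in Euclidean space. -/
def IsRegularSimplex {n : ℕ} (T : Set (V n)) : Prop :=
  ∃ v : Fin (n + 1) → V n, AffineIndependent ℝ v ∧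
    (∀ i j k l, i ≠ j → k ≠ l → dist (v i) (v j) = dist (v k) (v l)) ∧
    T = convexHull ℝ (Set.range v)

/-- The Euclidean unit ball in `ℝ^n`. -/
noncomputable def euclBall (n : ℕ) : Set (V n) := Metric.closedBall 0 1

/-- Pseudo completion of `K` with respect to the circumcenter `c`. -/
noncomputable def pseudoCompletion {n : ℕ} (B K : Set (V n)) (c : V n) : Set (V n) :=
  convexHull ℝ (K ∪ (c +ᵥ (mdiam B K - circum B K) • B))

/-- `B` is indecomposable: every convex summand is a homothet of `B`. -/
def IsIndecomposable {n : ℕ} (B : Set (V n)) : Prop :=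
  ∀ K L : Set (V n), Convex ℝ K → Convex ℝ L → B = K + L →
    (∃ (ρ : ℝ) (x : V n), 0 ≤ ρ ∧ K = x +ᵥ ρ • B) ∧
    (∃ (ρ : ℝ) (x : V n), 0 ≤ ρ ∧ L = x +ᵥ ρ • B)

/-- `B` is a (finite) sum of segments. -/
def IsSegmentSum {n : ℕ} (B : Set (V n)) : Prop :=
  ∃ (m : ℕ) (a b : Fin m → V n), B = ∑ i : Fin m, segment ℝ (a i) (b i)


/-!
If `K - K = γ • B`, then `B = γ⁻¹ • K + γ⁻¹ • (-K)`, so by indecomposability `K` is a dilate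
`c + γ • B`, whose circumradius and diameter are `γ` and `2γ`.

Suppose now that `2 R(K) ≤ D(K)` for every body `K`. Then every bounded set of diameter `≤ 2`
lies in a translate of `B`. Applied to `{0, v} ∪ (z + L)` with `L = B ∩ (v + B)`, this makes the
lens `L` a Minkowski summand of `B`, so `L = v / 2 + ρ • B` with `ρ ≤ 1 - ‖v‖ / 2`. For unit
vectors `p`, `u` with `‖u - p‖ ≤ 1` the point `2u - p` then lies in `B ∩ (2u + B) = {u}`, so
`u = p`. But in dimension `≥ 2` the unit sphere is connected, and it contains such a pair with
`‖u - p‖ = 1`. Hence some body has `j(K) > 1/2`.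
-/

open Filter Topology

theorem Set.smul_vadd_set_distrib {M E : Type*} [Monoid M] [AddMonoid E] [DistribMulAction M E]
    (a : M) (x : E) (S : Set E) : a • (x +ᵥ S) = a • x +ᵥ a • S := by
  simp only [← image_smul, ← image_vadd, image_image, vadd_eq_add, smul_add]

theorem eq_of_vadd_set_eq {E : Type*} [NormedAddCommGroup E] [InnerProductSpace ℝ E]
    {S : Set E} (hS : IsCompact S) (hne : S.Nonempty) {a b : E} (h : a +ᵥ S = b +ᵥ S) :
    a = b := by
  -- translating a maximiser of `⟪a - b, ·⟫` on `S` by `a - b` stays in `S` and increases it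
  obtain ⟨s, hs, hmax⟩ :=
    hS.exists_isMaxOn hne
      ((continuous_const (y := a - b)).inner (𝕜 := ℝ) continuous_id).continuousOn
  obtain ⟨s', hs', hss'⟩ : a + s ∈ b +ᵥ S := h ▸ Set.vadd_mem_vadd_set hs
  have hs'' : a - b + s = s' := by
    simp only [vadd_eq_add] at hss'
    rw [sub_add_eq_add_sub, ← hss', add_sub_cancel_left]
  have hle : inner ℝ (a - b) (a - b + s) ≤ inner ℝ (a - b) s := hmax (hs'' ▸ hs')
  rw [inner_add_right, real_inner_self_eq_norm_sq, add_le_iff_nonpos_left] at hle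
  exact sub_eq_zero.1 (norm_eq_zero.1 (pow_eq_zero_iff two_ne_zero |>.1
    (le_antisymm hle (sq_nonneg _))))

namespace IsSymUnitBall

variable {n : ℕ} {B : Set (V n)}

theorem convex (hB : IsSymUnitBall B) : Convex ℝ B := hB.1.1

theorem isCompact (hB : IsSymUnitBall B) : IsCompact B := hB.1.2.1

theorem neg_mem (hB : IsSymUnitBall B) {x : V n} (hx : x ∈ B) : -x ∈ B := by
  rw [hB.2]; exact Set.neg_mem_neg.2 hx

theorem zero_mem_interior (hB : IsSymUnitBall B) : (0 : V n) ∈ interior B := by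
  obtain ⟨x, hx⟩ := hB.1.2.2
  have hx' : -x ∈ interior B := by
    rw [hB.2, ← Set.image_neg_eq_neg]
    exact (Homeomorph.neg (V n)).image_interior B ▸ ⟨x, hx, rfl⟩
  simpa using hB.convex.interior hx hx' one_half_pos.le one_half_pos.le (add_halves 1)

theorem mem_nhds_zero (hB : IsSymUnitBall B) : B ∈ 𝓝 (0 : V n) :=
  mem_interior_iff_mem_nhds.1 hB.zero_mem_interior

theorem absorbent (hB : IsSymUnitBall B) : Absorbent ℝ B :=
  absorbent_nhds_zero hB.mem_nhds_zero

theorem continuous_gauge (hB : IsSymUnitBall B) : Continuous (gauge B) :=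
  _root_.continuous_gauge hB.convex hB.mem_nhds_zero

theorem gauge_neg (hB : IsSymUnitBall B) (x : V n) : gauge B (-x) = gauge B x :=
  _root_.gauge_neg (fun _ => hB.neg_mem) x

theorem gauge_sub_comm (hB : IsSymUnitBall B) (x y : V n) :
    gauge B (x - y) = gauge B (y - x) := by
  rw [← hB.gauge_neg, neg_sub]

theorem gauge_add_le (hB : IsSymUnitBall B) (x y : V n) :
    gauge B (x + y) ≤ gauge B x + gauge B y :=
  _root_.gauge_add_le hB.convex hB.absorbent x y

theorem gauge_sub_le (hB : IsSymUnitBall B) (x y : V n) :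
    gauge B (x - y) ≤ gauge B x + gauge B y := by
  simpa only [sub_eq_add_neg, hB.gauge_neg] using hB.gauge_add_le x (-y)

theorem gauge_eq_zero (hB : IsSymUnitBall B) {x : V n} : gauge B x = 0 ↔ x = 0 :=
  _root_.gauge_eq_zero hB.absorbent ((NormedSpace.isVonNBounded_iff ℝ).2 hB.isCompact.isBounded)

theorem gauge_pos (hB : IsSymUnitBall B) {x : V n} : 0 < gauge B x ↔ x ≠ 0 :=
  _root_.gauge_pos hB.absorbent ((NormedSpace.isVonNBounded_iff ℝ).2 hB.isCompact.isBounded)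

theorem mem_iff_gauge_le_one (hB : IsSymUnitBall B) {x : V n} : x ∈ B ↔ gauge B x ≤ 1 := by
  rw [gauge_le_one_iff_mem_closure hB.convex hB.mem_nhds_zero, hB.isCompact.isClosed.closure_eq]

theorem mem_smul_iff (hB : IsSymUnitBall B) {ρ : ℝ} (hρ : 0 ≤ ρ) {x : V n} :
    x ∈ ρ • B ↔ gauge B x ≤ ρ := by
  rcases hρ.eq_or_lt with rfl | hρ
  · rw [zero_smul_set ⟨0, interior_subset hB.zero_mem_interior⟩, Set.mem_zero,
      (gauge_nonneg x).ge_iff_eq', hB.gauge_eq_zero]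
  · rw [Set.mem_smul_set_iff_inv_smul_mem₀ hρ.ne', hB.mem_iff_gauge_le_one,
      gauge_smul_of_nonneg (inv_nonneg.2 hρ.le), smul_eq_mul, inv_mul_le_iff₀ hρ, mul_one]

theorem mem_vadd_smul_iff (hB : IsSymUnitBall B) {ρ : ℝ} (hρ : 0 ≤ ρ) {c x : V n} :
    x ∈ c +ᵥ ρ • B ↔ gauge B (x - c) ≤ ρ := by
  rw [Set.mem_vadd_set_iff_neg_vadd_mem, vadd_eq_add, neg_add_eq_sub, hB.mem_smul_iff hρ]

theorem mem_vadd_iff (hB : IsSymUnitBall B) {c x : V n} :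
    x ∈ c +ᵥ B ↔ gauge B (x - c) ≤ 1 := by
  rw [← hB.mem_vadd_smul_iff zero_le_one, one_smul]

theorem gauge_inv_smul_self (hB : IsSymUnitBall B) {x : V n} (hx : x ≠ 0) :
    gauge B ((gauge B x)⁻¹ • x) = 1 := by
  have hpos := hB.gauge_pos.2 hx
  rw [gauge_smul_of_nonneg (inv_nonneg.2 hpos.le), smul_eq_mul, inv_mul_cancel₀ hpos.ne']

theorem exists_gauge_eq_one (hB : IsSymUnitBall B) [Nontrivial (V n)] :
    ∃ p : V n, gauge B p = 1 :=
  ⟨_, hB.gauge_inv_smul_self (exists_ne (0 : V n)).choose_spec⟩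

theorem gauge_sub_le_two_mul (hB : IsSymUnitBall B) {ρ : ℝ} (hρ : 0 ≤ ρ)
    {c x y : V n} (hx : x ∈ c +ᵥ ρ • B) (hy : y ∈ c +ᵥ ρ • B) : gauge B (x - y) ≤ 2 * ρ := by
  rw [hB.mem_vadd_smul_iff hρ] at hx hy
  calc gauge B (x - y) = gauge B ((x - c) - (y - c)) := by rw [sub_sub_sub_cancel_right]
    _ ≤ ρ + ρ := (hB.gauge_sub_le _ _).trans (add_le_add hx hy)
    _ = 2 * ρ := by ring

end IsSymUnitBall

theorem IsConvexBody.nontrivial {n : ℕ} [Nontrivial (V n)] {K : Set (V n)}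
    (hK : IsConvexBody K) : K.Nontrivial := by
  obtain ⟨x, hx⟩ := hK.2.2
  by_contra h
  rw [Set.not_nontrivial_iff] at h
  rw [h.eq_singleton_of_mem (interior_subset hx), interior_singleton] at hx
  exact hx

section RadiusDiameter

variable {n : ℕ} {B K : Set (V n)}

theorem circum_nonneg : 0 ≤ circum B K :=
  Real.sInf_nonneg fun _ hρ => hρ.1.le

theorem circum_le {ρ : ℝ} (hρ : 0 < ρ) {c : V n} (h : K ⊆ c +ᵥ ρ • B) : circum B K ≤ ρ :=
  csInf_le ⟨0, fun _ hr => hr.1.le⟩ ⟨hρ, c, h⟩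

theorem mdiam_le {d : ℝ} (hd : 0 ≤ d) (h : ∀ x ∈ K, ∀ y ∈ K, gauge B (x - y) ≤ d) :
    mdiam B K ≤ d :=
  Real.sSup_le (by rintro _ ⟨x, hx, y, hy, rfl⟩; exact h x hx y hy) hd

theorem IsSymUnitBall.exists_subset_smul (hB : IsSymUnitBall B)
    (hK : Bornology.IsBounded K) : ∃ ρ : ℝ, 0 < ρ ∧ K ⊆ (0 : V n) +ᵥ ρ • B := by
  obtain ⟨ρ, hρ, h⟩ := ((NormedSpace.isVonNBounded_iff ℝ).2 hK hB.mem_nhds_zero).exists_pos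
  exact ⟨ρ, hρ, by rw [zero_vadd]; exact h ρ (by rw [Real.norm_of_nonneg hρ.le])⟩

theorem IsSymUnitBall.gauge_sub_le_mdiam (hB : IsSymUnitBall B) (hK : Bornology.IsBounded K)
    {x y : V n} (hx : x ∈ K) (hy : y ∈ K) : gauge B (x - y) ≤ mdiam B K := by
  refine le_csSup ?_ ⟨x, hx, y, hy, rfl⟩
  obtain ⟨ρ, hρ, hsub⟩ := hB.exists_subset_smul hK
  have hbound : ∀ z ∈ K, gauge B z ≤ ρ := fun z hz => by
    simpa using (hB.mem_vadd_smul_iff hρ.le).1 (hsub hz)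
  refine ⟨ρ + ρ, ?_⟩
  rintro _ ⟨x, hx, y, hy, rfl⟩
  exact (hB.gauge_sub_le x y).trans (add_le_add (hbound x hx) (hbound y hy))

theorem IsSymUnitBall.mdiam_le_two_mul_circum (hB : IsSymUnitBall B)
    (hK : Bornology.IsBounded K) : mdiam B K ≤ 2 * circum B K := by
  rw [← div_le_iff₀' two_pos]
  obtain ⟨ρ₀, hρ₀, hsub₀⟩ := hB.exists_subset_smul hK
  refine le_csInf ⟨ρ₀, hρ₀, 0, hsub₀⟩ ?_
  rintro ρ ⟨hρ, c, hsub⟩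
  rw [div_le_iff₀' two_pos]
  exact mdiam_le (by positivity) fun x hx y hy =>
    hB.gauge_sub_le_two_mul hρ.le (hsub hx) (hsub hy)

theorem IsConvexBody.mdiam_pos [Nontrivial (V n)] (hB : IsSymUnitBall B) (hK : IsConvexBody K) :
    0 < mdiam B K := by
  obtain ⟨x, hx, y, hy, hxy⟩ := hK.nontrivial
  exact (hB.gauge_pos.2 (sub_ne_zero.2 hxy)).trans_le
    (hB.gauge_sub_le_mdiam hK.2.1.isBounded hx hy)

theorem IsConvexBody.circum_le_mdiam [Nontrivial (V n)] (hB : IsSymUnitBall B)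
    (hK : IsConvexBody K) : circum B K ≤ mdiam B K := by
  obtain ⟨x₀, hx₀⟩ := hK.nontrivial.nonempty
  refine circum_le (hK.mdiam_pos hB) (c := x₀) fun x hx => ?_
  exact (hB.mem_vadd_smul_iff (hK.mdiam_pos hB).le).2
    (hB.gauge_sub_le_mdiam hK.2.1.isBounded hx hx₀)

theorem IsSymUnitBall.bddAbove_jungRatio [Nontrivial (V n)] (hB : IsSymUnitBall B) :
    BddAbove {j : ℝ | ∃ K : Set (V n), IsConvexBody K ∧ j = jungRatio B K} := by
  refine ⟨1, ?_⟩
  rintro _ ⟨K, hK, rfl⟩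
  exact div_le_one_of_le₀ (hK.circum_le_mdiam hB) (hK.mdiam_pos hB).le

theorem IsSymUnitBall.exists_forall_gauge_sub_le_of_circum_lt (hB : IsSymUnitBall B)
    (hK : Bornology.IsBounded K) {r : ℝ} (h : circum B K < r) :
    ∃ c : V n, ∀ x ∈ K, gauge B (x - c) ≤ r := by
  obtain ⟨ρ₀, hρ₀, hsub₀⟩ := hB.exists_subset_smul hK
  obtain ⟨ρ, ⟨hρ, c, hsub⟩, hlt⟩ :=
    exists_lt_of_csInf_lt (s := {ρ : ℝ | 0 < ρ ∧ ∃ c : V n, K ⊆ c +ᵥ ρ • B}) ⟨ρ₀, hρ₀, 0, hsub₀⟩ h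
  exact ⟨c, fun x hx => ((hB.mem_vadd_smul_iff hρ.le).1 (hsub hx)).trans hlt.le⟩

theorem IsSymUnitBall.exists_forall_gauge_sub_le_circum (hB : IsSymUnitBall B)
    (hK : Bornology.IsBounded K) (hne : K.Nonempty) :
    ∃ c : V n, ∀ x ∈ K, gauge B (x - c) ≤ circum B K := by
  choose c hc using fun k : ℕ => hB.exists_forall_gauge_sub_le_of_circum_lt hK
    (lt_add_of_pos_right (circum B K) (Nat.one_div_pos_of_nat (n := k)))
  obtain ⟨x₀, hx₀⟩ := hne
  have hc_mem : ∀ k, c k ∈ x₀ +ᵥ (circum B K + 1) • B := fun k => by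
    rw [hB.mem_vadd_smul_iff (by linarith [circum_nonneg (B := B) (K := K)]), hB.gauge_sub_comm]
    refine (hc k x₀ hx₀).trans ?_
    gcongr
    exact div_le_one_of_le₀ (by simp) (by positivity)
  obtain ⟨c₀, -, φ, hφ, hlim⟩ :=
    tendsto_subseq_of_bounded ((hB.isCompact.smul _).vadd x₀).isBounded hc_mem
  refine ⟨c₀, fun x hx => le_of_tendsto_of_tendsto'
    ((hB.continuous_gauge.tendsto _).comp (tendsto_const_nhds.sub hlim)) ?_
    fun k => hc (φ k) x hx⟩
  simpa only [add_zero, Function.comp_def] using (tendsto_const_nhds (x := circum B K)).add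
    (tendsto_one_div_add_atTop_nhds_zero_nat.comp hφ.tendsto_atTop)

end RadiusDiameter

section Dilates

variable {n : ℕ} {B K : Set (V n)}

theorem IsConstWidth.exists_eq_vadd_smul [Nontrivial (V n)] (hind : IsIndecomposable B)
    (hK : IsConvexBody K) (hw : IsConstWidth B K) :
    ∃ (γ : ℝ) (c : V n), 0 < γ ∧ K = c +ᵥ γ • B := by
  obtain ⟨γ, hγ, hKK⟩ := hw
  have hB : B = γ⁻¹ • K + γ⁻¹ • (-K) := by
    rw [← smul_add, ← sub_eq_add_neg, hKK, smul_smul, inv_mul_cancel₀ hγ.ne', one_smul]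
  obtain ⟨⟨ρ, x, hρ, hKeq⟩, -⟩ := hind _ _ (hK.1.smul _) (hK.1.neg.smul _) hB
  have hK' : K = γ • x +ᵥ (γ * ρ) • B := by
    rw [← smul_inv_smul₀ hγ.ne' K, hKeq, Set.smul_vadd_set_distrib, smul_smul]
  refine ⟨γ * ρ, γ • x, mul_pos hγ (hρ.lt_of_ne fun h => ?_), hK'⟩
  rw [← h, mul_zero] at hK'
  refine hK.nontrivial.not_subset_singleton (x := γ • x) (hK'.trans_subset ?_)
  refine (Set.vadd_set_mono (zero_smul_set_subset B)).trans ?_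
  rintro _ ⟨y, hy, rfl⟩
  simp [Set.mem_zero.1 hy]

theorem IsSymUnitBall.mdiam_vadd_smul [Nontrivial (V n)] (hB : IsSymUnitBall B) (c : V n)
    {γ : ℝ} (hγ : 0 < γ) : mdiam B (c +ᵥ γ • B) = 2 * γ := by
  refine le_antisymm (mdiam_le (by positivity) fun x hx y hy =>
    hB.gauge_sub_le_two_mul hγ.le hx hy) ?_
  obtain ⟨p, hp⟩ := hB.exists_gauge_eq_one
  have hmem : ∀ q : V n, gauge B q ≤ 1 → c + γ • q ∈ c +ᵥ γ • B := fun q hq => by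
    rw [hB.mem_vadd_smul_iff hγ.le, add_sub_cancel_left, gauge_smul_of_nonneg hγ.le, smul_eq_mul]
    exact mul_le_of_le_one_right hγ.le hq
  have := hB.gauge_sub_le_mdiam ((hB.isCompact.smul γ).vadd c).isBounded
    (hmem p hp.le) (hmem (-p) (by rw [hB.gauge_neg, hp]))
  rw [add_sub_add_left_eq_sub, ← smul_sub, sub_neg_eq_add, ← two_smul ℝ, smul_smul,
    gauge_smul_of_nonneg (by positivity), hp, smul_eq_mul, mul_one] at this
  linarith

theorem IsSymUnitBall.circum_vadd_smul [Nontrivial (V n)] (hB : IsSymUnitBall B) (c : V n)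
    {γ : ℝ} (hγ : 0 < γ) : circum B (c +ᵥ γ • B) = γ := by
  refine le_antisymm (circum_le hγ subset_rfl) ?_
  have := hB.mdiam_le_two_mul_circum ((hB.isCompact.smul γ).vadd c).isBounded
  rw [hB.mdiam_vadd_smul c hγ] at this
  linarith

theorem IsSymUnitBall.jungRatio_vadd_smul [Nontrivial (V n)] (hB : IsSymUnitBall B) (c : V n)
    {γ : ℝ} (hγ : 0 < γ) : jungRatio B (c +ᵥ γ • B) = 1 / 2 := by
  rw [jungRatio, hB.circum_vadd_smul c hγ, hB.mdiam_vadd_smul c hγ]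
  field_simp

end Dilates

section JungHalf

variable {n : ℕ} {B : Set (V n)}

theorem IsSymUnitBall.gauge_sub_le_of_mem_closedConvexHull (hB : IsSymUnitBall B)
    {X : Set (V n)} {r : ℝ} (hr : 0 ≤ r) (h : ∀ x ∈ X, ∀ y ∈ X, gauge B (x - y) ≤ r)
    {a a' : V n} (ha : a ∈ closedConvexHull ℝ X) (ha' : a' ∈ closedConvexHull ℝ X) :
    gauge B (a - a') ≤ r := by
  have key : ∀ y : V n, (∀ x ∈ X, gauge B (x - y) ≤ r) →
      ∀ a ∈ closedConvexHull ℝ X, gauge B (a - y) ≤ r := fun y hy a ha =>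
    (hB.mem_vadd_smul_iff hr).1 <| closedConvexHull_min
      (fun x hx => (hB.mem_vadd_smul_iff hr).2 (hy x hx)) ((hB.convex.smul r).vadd y)
      ((hB.isCompact.smul r).isClosed.vadd y) ha
  refine key a' (fun x hx => ?_) a ha
  rw [hB.gauge_sub_comm]
  exact key x (fun y hy => h y hy x hx) a' ha'

theorem IsSymUnitBall.exists_forall_gauge_sub_le_one (hB : IsSymUnitBall B)
    (hkey : ∀ K : Set (V n), IsConvexBody K → 2 * circum B K ≤ mdiam B K)
    {X : Set (V n)} (hX : Bornology.IsBounded X) (hne : X.Nonempty)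
    (hpair : X.Pairwise fun x y => gauge B (x - y) ≤ 2) :
    ∃ c : V n, ∀ x ∈ X, gauge B (x - c) ≤ 1 := by
  have hpair' : ∀ x ∈ X, ∀ y ∈ X, gauge B (x - y) ≤ 2 := fun x hx y hy =>
    (eq_or_ne x y).elim (fun h => by simp [h]) (hpair hx hy)
  obtain ⟨x₀, hx₀⟩ := hne
  have hH : IsCompact (closedConvexHull ℝ X) := by
    refine Metric.isCompact_of_isClosed_isBounded isClosed_closedConvexHull ?_
    rw [closedConvexHull_eq_closure_convexHull]
    exact (isBounded_convexHull.2 hX).closure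
  set K := closedConvexHull ℝ X + B
  have hK : IsConvexBody K := ⟨convex_closedConvexHull.add hB.convex, hH.add hB.isCompact,
    _, subset_interior_add_right (Set.add_mem_add (subset_closedConvexHull hx₀)
      hB.zero_mem_interior)⟩
  have hdiam : mdiam B K ≤ 4 := by
    refine mdiam_le (by norm_num) ?_
    rintro _ ⟨a, ha, b, hb, rfl⟩ _ ⟨a', ha', b', hb', rfl⟩
    rw [hB.mem_iff_gauge_le_one] at hb hb'
    calc gauge B (a + b - (a' + b')) = gauge B ((a - a') + (b - b')) := by abel_nf
      _ ≤ 2 + (1 + 1) := (hB.gauge_add_le _ _).trans <| add_le_add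
          (hB.gauge_sub_le_of_mem_closedConvexHull zero_le_two hpair' ha ha')
          ((hB.gauge_sub_le _ _).trans (add_le_add hb hb'))
      _ = 4 := by norm_num
  obtain ⟨c, hc⟩ := hB.exists_forall_gauge_sub_le_circum hK.2.1.isBounded
    ⟨x₀ + 0, Set.add_mem_add (subset_closedConvexHull hx₀)
      (interior_subset hB.zero_mem_interior)⟩
  refine ⟨c, fun x hx => ?_⟩
  rcases (gauge_nonneg (x - c)).eq_or_lt with h0 | hpos
  · exact h0 ▸ zero_le_one
  -- the farthest point of `x + B` from `c` is at distance `gauge B (x - c) + 1`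
  have hxK : x + (gauge B (x - c))⁻¹ • (x - c) ∈ K :=
    Set.add_mem_add (subset_closedConvexHull hx)
      (hB.mem_iff_gauge_le_one.2 (hB.gauge_inv_smul_self (hB.gauge_pos.1 hpos)).le)
  have := (hc _ hxK).trans (by linarith [hkey K hK] : circum B K ≤ 2)
  rw [show x + (gauge B (x - c))⁻¹ • (x - c) - c = (1 + (gauge B (x - c))⁻¹) • (x - c) by
      module,
    gauge_smul_of_nonneg (by positivity), smul_eq_mul, add_mul, one_mul,
    inv_mul_cancel₀ hpos.ne'] at this
  linarith

end JungHalf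

section Lens

variable {n : ℕ} {B : Set (V n)}

def lens (B : Set (V n)) (v : V n) : Set (V n) := B ∩ (v +ᵥ B)

theorem IsSymUnitBall.mem_lens_iff (hB : IsSymUnitBall B) {v y : V n} :
    y ∈ lens B v ↔ gauge B y ≤ 1 ∧ gauge B (y - v) ≤ 1 := by
  rw [lens, Set.mem_inter_iff, hB.mem_iff_gauge_le_one, hB.mem_vadd_iff]

theorem IsSymUnitBall.sub_mem_lens_iff (hB : IsSymUnitBall B) {v y : V n} :
    v - y ∈ lens B v ↔ y ∈ lens B v := by
  rw [hB.mem_lens_iff, hB.mem_lens_iff, sub_sub_cancel_left, hB.gauge_neg, hB.gauge_sub_comm v y,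
    and_comm]

theorem IsSymUnitBall.lens_add_eq (hB : IsSymUnitBall B)
    (hkey : ∀ K : Set (V n), IsConvexBody K → 2 * circum B K ≤ mdiam B K)
    {v : V n} (hv : gauge B v ≤ 2) :
    lens B v + {t | ∀ w ∈ lens B v, w + t ∈ B} = B := by
  refine subset_antisymm (by rintro _ ⟨w, hw, t, ht, rfl⟩; exact ht w hw) fun z hz => ?_
  rw [hB.mem_iff_gauge_le_one] at hz
  have hL : ∀ w ∈ lens B v, gauge B w ≤ 1 ∧ gauge B (w - v) ≤ 1 := fun w => hB.mem_lens_iff.1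
  have : Std.Symm fun x y : V n => gauge B (x - y) ≤ 2 :=
    ⟨fun x y h => by rwa [hB.gauge_sub_comm]⟩
  -- a center of `{0, v} ∪ (z + lens B v)` lies in the lens and translates `z + lens B v` into `B`
  have hpair : (insert 0 (insert v (z +ᵥ lens B v))).Pairwise
      fun x y => gauge B (x - y) ≤ 2 := by
    rw [Set.pairwise_insert_of_symm, Set.pairwise_insert_of_symm]
    refine ⟨⟨?_, ?_⟩, ?_⟩
    · rintro _ ⟨w, hw, rfl⟩ _ ⟨w', hw', rfl⟩ -
      show gauge B (z + w - (z + w')) ≤ 2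
      rw [add_sub_add_left_eq_sub, ← sub_sub_sub_cancel_right w w' v]
      exact (hB.gauge_sub_le _ _).trans
        ((add_le_add (hL w hw).2 (hL w' hw').2).trans_eq one_add_one_eq_two)
    · rintro _ ⟨w, hw, rfl⟩ -
      show gauge B (v - (z + w)) ≤ 2
      rw [hB.gauge_sub_comm, add_sub_assoc]
      exact (hB.gauge_add_le _ _).trans
        ((add_le_add hz (hL w hw).2).trans_eq one_add_one_eq_two)
    · rintro _ (rfl | ⟨w, hw, rfl⟩) -
      · simpa only [zero_sub, hB.gauge_neg] using hv
      · show gauge B (0 - (z + w)) ≤ 2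
        rw [zero_sub, hB.gauge_neg]
        exact (hB.gauge_add_le _ _).trans
          ((add_le_add hz (hL w hw).1).trans_eq one_add_one_eq_two)
  obtain ⟨c, hc⟩ := hB.exists_forall_gauge_sub_le_one hkey
    (((hB.isCompact.isBounded.subset Set.inter_subset_left).vadd z).insert v |>.insert 0)
    (Set.insert_nonempty _ _) hpair
  have hc0 : gauge B c ≤ 1 := by simpa [hB.gauge_neg] using hc 0 (Set.mem_insert _ _)
  have hcv : gauge B (c - v) ≤ 1 := by
    rw [hB.gauge_sub_comm]; exact hc v (Set.mem_insert_of_mem _ (Set.mem_insert _ _))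
  refine ⟨c, hB.mem_lens_iff.2 ⟨hc0, hcv⟩, z - c, fun w hw => ?_, add_sub_cancel c z⟩
  rw [hB.mem_iff_gauge_le_one, add_sub_left_comm, ← add_sub_assoc]
  exact hc (z + w)
    (Set.mem_insert_of_mem _ (Set.mem_insert_of_mem _ (Set.vadd_mem_vadd_set hw)))

end Lens

section Indecomposable

variable {n : ℕ} {B : Set (V n)}

theorem IsSymUnitBall.lens_eq_vadd_smul (hB : IsSymUnitBall B) (hind : IsIndecomposable B)
    (hkey : ∀ K : Set (V n), IsConvexBody K → 2 * circum B K ≤ mdiam B K)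
    {v : V n} (hv : gauge B v ≤ 2) :
    ∃ ρ : ℝ, 0 ≤ ρ ∧ lens B v = (2 : ℝ)⁻¹ • v +ᵥ ρ • B := by
  have hC : Convex ℝ {t | ∀ w ∈ lens B v, w + t ∈ B} := fun t ht t' ht' a b ha hb hab w hw => by
    convert hB.convex (ht w hw) (ht' w hw) ha hb hab using 1
    rw [smul_add, smul_add, add_add_add_comm, ← add_smul, hab, one_smul]
  obtain ⟨⟨ρ, x, hρ, hL⟩, -⟩ :=
    hind (lens B v) _ (hB.convex.inter (hB.convex.vadd v)) hC (hB.lens_add_eq hkey hv).symm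
  -- `lens B v` is symmetric about `v / 2`, and a dilate of `B` is symmetric only about its center
  have hsymm : x +ᵥ ρ • B = (v - x) +ᵥ ρ • B := by
    ext y
    rw [← hL, ← hB.sub_mem_lens_iff, hL, hB.mem_vadd_smul_iff hρ, hB.mem_vadd_smul_iff hρ,
      hB.gauge_sub_comm, sub_sub_eq_add_sub, sub_sub_eq_add_sub, add_comm x y]
  have hx := eq_of_vadd_set_eq (hB.isCompact.smul ρ)
    ⟨_, Set.smul_mem_smul_set (interior_subset hB.zero_mem_interior)⟩ hsymm
  refine ⟨ρ, hρ, hL.trans ?_⟩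
  rw [eq_sub_iff_add_eq, ← two_smul ℝ] at hx
  rw [← hx, inv_smul_smul₀ two_ne_zero]

theorem IsSymUnitBall.gauge_sub_le_of_mem_lens (hB : IsSymUnitBall B)
    (hind : IsIndecomposable B)
    (hkey : ∀ K : Set (V n), IsConvexBody K → 2 * circum B K ≤ mdiam B K)
    {v y : V n} (hv0 : v ≠ 0) (hv : gauge B v ≤ 2) (hy : y ∈ lens B v) :
    gauge B (y - (2 : ℝ)⁻¹ • v) ≤ 1 - gauge B v / 2 := by
  obtain ⟨ρ, hρ, hL⟩ := hB.lens_eq_vadd_smul hind hkey hv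
  rw [hL, hB.mem_vadd_smul_iff hρ] at hy
  refine hy.trans ?_
  -- the point of the lens farthest from `0` in the direction of `v` still lies in `B`
  set q := (gauge B v)⁻¹ • v
  have hq : gauge B q = 1 := hB.gauge_inv_smul_self hv0
  have hvq : v = gauge B v • q := (smul_inv_smul₀ (hB.gauge_pos.2 hv0).ne' v).symm
  have hmem : (2 : ℝ)⁻¹ • v + ρ • q ∈ lens B v := by
    rw [hL, hB.mem_vadd_smul_iff hρ, add_sub_cancel_left, gauge_smul_of_nonneg hρ, hq,
      smul_eq_mul, mul_one]
  have hB1 := (hB.mem_lens_iff.1 hmem).1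
  rw [show (2 : ℝ)⁻¹ • v + ρ • q = ((2 : ℝ)⁻¹ * gauge B v + ρ) • q by
      conv_lhs => rw [hvq]
      rw [smul_smul, add_smul],
    gauge_smul_of_nonneg (add_nonneg (mul_nonneg (by norm_num) (gauge_nonneg _)) hρ), hq,
    smul_eq_mul, mul_one] at hB1
  linarith

theorem IsSymUnitBall.eq_of_gauge_sub_le_one (hB : IsSymUnitBall B) (hind : IsIndecomposable B)
    (hkey : ∀ K : Set (V n), IsConvexBody K → 2 * circum B K ≤ mdiam B K)
    {p u : V n} (hp : gauge B p = 1) (hu : gauge B u = 1) (hup : gauge B (u - p) ≤ 1) :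
    u = p := by
  have h2u : gauge B ((2 : ℝ) • u) = 2 := by
    rw [gauge_smul_of_nonneg zero_le_two, hu, smul_eq_mul, mul_one]
  have hhalf := hB.gauge_sub_le_of_mem_lens hind hkey (hB.gauge_pos.1 (by rw [hp]; exact one_pos))
    (by rw [hp]; norm_num) (hB.mem_lens_iff.2 ⟨hu.le, hup⟩)
  -- the reflection `2u - p` of `p` in `u` lies in the lens of `2u`, which is `{u}`
  have hmem : (2 : ℝ) • u - p ∈ lens B ((2 : ℝ) • u) := by
    refine hB.mem_lens_iff.2 ⟨?_, ?_⟩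
    · rw [show (2 : ℝ) • u - p = (2 : ℝ) • (u - (2 : ℝ)⁻¹ • p) by module,
        gauge_smul_of_nonneg zero_le_two, smul_eq_mul]
      linarith
    · rw [sub_sub_cancel_left, hB.gauge_neg, hp]
  have := hB.gauge_sub_le_of_mem_lens hind hkey (hB.gauge_pos.1 (by rw [h2u]; exact two_pos))
    h2u.le hmem
  rw [h2u, inv_smul_smul₀ two_ne_zero, show (2 : ℝ) • u - p - u = u - p by module] at this
  exact sub_eq_zero.1 (hB.gauge_eq_zero.1 (le_antisymm (by linarith) (gauge_nonneg _)))

theorem IsSymUnitBall.exists_gauge_sub_eq_one (hB : IsSymUnitBall B) (hn : 2 ≤ n) :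
    ∃ p u : V n, gauge B p = 1 ∧ gauge B u = 1 ∧ gauge B (u - p) = 1 := by
  have : NeZero n := ⟨by omega⟩
  have hrank : 1 < Module.rank ℝ (V n) := by
    rw [← Module.finrank_eq_rank, finrank_euclideanSpace_fin]
    exact_mod_cast hn
  obtain ⟨x₁, hx₁⟩ := (NormedSpace.sphere_nonempty (x := (0 : V n)) (r := 1)).2 zero_le_one
  have hne : ∀ x ∈ Metric.sphere (0 : V n) 1, x ≠ 0 := fun x hx =>
    ne_zero_of_mem_sphere one_ne_zero ⟨x, hx⟩
  set p := (gauge B x₁)⁻¹ • x₁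
  -- move from `p` to `-p` along the unit sphere, normalised to the boundary of `B`
  set f : V n → ℝ := fun x => gauge B ((gauge B x)⁻¹ • x - p)
  have hf : ContinuousOn f (Metric.sphere 0 1) := by
    refine (hB.continuous_gauge.comp_continuousOn
      (((hB.continuous_gauge.continuousOn.inv₀ fun x hx => ?_).smul continuousOn_id).sub
        continuousOn_const))
    exact (hB.gauge_pos.2 (hne x hx)).ne'
  have hf₁ : f x₁ = 0 := by simp [f, p]
  have hp : gauge B p = 1 := hB.gauge_inv_smul_self (hne x₁ hx₁)
  have hf₂ : f (-x₁) = 2 := by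
    show gauge B ((gauge B (-x₁))⁻¹ • -x₁ - p) = 2
    rw [hB.gauge_neg, smul_neg, ← neg_add', hB.gauge_neg, ← two_smul ℝ,
      gauge_smul_of_nonneg zero_le_two, hp, smul_eq_mul, mul_one]
  obtain ⟨x, hx, hfx⟩ := (isPreconnected_sphere hrank 0 1).intermediate_value hx₁
    (by simpa using hx₁) hf (show (1 : ℝ) ∈ Set.Icc (f x₁) (f (-x₁)) by
      rw [hf₁, hf₂]; constructor <;> norm_num)
  exact ⟨p, _, hp, hB.gauge_inv_smul_self (hne x hx), hfx⟩

theorem IsSymUnitBall.exists_mdiam_lt_two_mul_circum (hB : IsSymUnitBall B)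
    (hind : IsIndecomposable B) (hn : 2 ≤ n) :
    ∃ K : Set (V n), IsConvexBody K ∧ mdiam B K < 2 * circum B K := by
  by_contra! hkey
  obtain ⟨p, u, hp, hu, hup⟩ := hB.exists_gauge_sub_eq_one hn
  rw [hB.eq_of_gauge_sub_le_one hind hkey hp hu hup.le, sub_self, gauge_zero] at hup
  exact zero_ne_one hup

end Indecomposable

theorem stmt16_general {n : ℕ} (hn : 3 ≤ n) (B : Set (V n)) (hB : IsSymUnitBall B)
    (hind : IsIndecomposable B) :
    (∀ K : Set (V n), IsConvexBody K → IsConstWidth B K →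
      ∃ (γ : ℝ) (c : V n), 0 < γ ∧ K = c +ᵥ γ • B) ∧
    (∀ K : Set (V n), IsConvexBody K → IsConstWidth B K →
      jungRatio B K = 1 / 2) ∧
    1 / 2 < jungConst B := by
  have : NeZero n := ⟨by omega⟩
  have hdil : ∀ K : Set (V n), IsConvexBody K → IsConstWidth B K →
      ∃ (γ : ℝ) (c : V n), 0 < γ ∧ K = c +ᵥ γ • B := fun K hK hw =>
    hw.exists_eq_vadd_smul hind hK
  refine ⟨hdil, fun K hK hw => ?_, ?_⟩
  · obtain ⟨γ, c, hγ, rfl⟩ := hdil K hK hw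
    exact hB.jungRatio_vadd_smul c hγ
  · obtain ⟨K, hK, hlt⟩ := hB.exists_mdiam_lt_two_mul_circum hind (by omega)
    refine lt_of_lt_of_le ?_ (le_csSup hB.bddAbove_jungRatio ⟨K, hK, rfl⟩)
    rw [jungRatio, lt_div_iff₀ (hK.mdiam_pos hB)]
    linarith

/-- For an indecomposable unit ball that is not a sum of segments (n ≥ 3),
constant width bodies are exactly the dilates of `B`, they all have Jung
ratio `1/2`, and the Jung constant is strictly larger than `1/2`. -/
theorem stmt16 {n : ℕ} (hn : 3 ≤ n) (B : Set (V n)) (hB : IsSymUnitBall B)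
    (hind : IsIndecomposable B) (hseg : ¬IsSegmentSum B) :
    (∀ K : Set (V n), IsConvexBody K → IsConstWidth B K →
      ∃ (γ : ℝ) (c : V n), 0 < γ ∧ K = c +ᵥ γ • B) ∧
    (∀ K : Set (V n), IsConvexBody K → IsConstWidth B K →
      jungRatio B K = 1 / 2) ∧
    1 / 2 < jungConst B :=
  stmt16_general hn B hB hind
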